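/- Let a > 0 and σ_N, σ_Y > 0. Define g(ξ) = σ_Y φ(ξ/(2σ_N))·(Φ((a+ξ)/σ_Y) − Φ(a/σ_Y)) − σ_N φ((a+ξ)/σ_Y)·(2Φ(ξ/(2σ_N)) − 1). Then g(ξ) = φ(0)φ(a/σ_Y)(a/(2σ_Y²))ξ² + O(ξ³) as ξ → 0⁺; in particular, g(ξ) > 0 for all sufficiently small ξ > 0. -/

import Mathlib

open Real Set MeasureTheory Filter Asymptotics

/-- Standard normal density. -/
noncomputable def stdGaussPDF (x : ℝ) : ℝ := (Real.sqrt (2 * Real.pi))⁻¹ * Real.exp (-x ^ 2 / 2)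

/-- Standard normal CDF. -/
noncomputable def stdGaussCDF (x : ℝ) : ℝ := ∫ t in Set.Iic x, stdGaussPDF t

lemma pdf_eq (x : ℝ) : stdGaussPDF x = (Real.sqrt (2 * Real.pi))⁻¹ * Real.exp (-(1/2 : ℝ) * x ^ 2) := by
  unfold stdGaussPDF; ring_nf

lemma pdf_pos (x : ℝ) : 0 < stdGaussPDF x := by
  have h : (0:ℝ) < Real.sqrt (2 * Real.pi) := Real.sqrt_pos.2 (by positivity)
  exact mul_pos (inv_pos.2 h) (Real.exp_pos _)

lemma pdf_integrable : MeasureTheory.Integrable stdGaussPDF := by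
  have : MeasureTheory.Integrable (fun x : ℝ => Real.exp (-(1/2 : ℝ) * x ^ 2)) :=
    integrable_exp_neg_mul_sq (by norm_num)
  have h := this.const_mul (Real.sqrt (2 * Real.pi))⁻¹
  exact h.congr (Filter.Eventually.of_forall fun x => (pdf_eq x).symm)

lemma pdf_continuous : Continuous stdGaussPDF := by
  unfold stdGaussPDF; fun_prop

lemma pdf_contDiff : ContDiff ℝ 1 stdGaussPDF := by
  unfold stdGaussPDF
  exact contDiff_const.mul ((Real.contDiff_exp.comp ((contDiff_id.pow 2).neg.div_const 2)))

lemma pdf_hasDerivAt (x : ℝ) : HasDerivAt stdGaussPDF (-x * stdGaussPDF x) x := by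
  unfold stdGaussPDF
  have h1 : HasDerivAt (fun x : ℝ => -x ^ 2 / 2) (-x) x := by
    have := ((hasDerivAt_pow 2 x).neg).div_const 2
    refine this.congr_deriv ?_; ring
  have h2 := (Real.hasDerivAt_exp (-x ^ 2 / 2)).comp x h1
  have h3 := h2.const_mul (Real.sqrt (2 * Real.pi))⁻¹
  refine h3.congr_deriv ?_; ring

lemma total_integral : ∫ x : ℝ, stdGaussPDF x = 1 := by
  have h : ∫ x : ℝ, Real.exp (-(1/2:ℝ) * x ^ 2) = Real.sqrt (π / (1/2)) := integral_gaussian (1/2)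
  have : ∫ x : ℝ, stdGaussPDF x = (Real.sqrt (2 * Real.pi))⁻¹ * ∫ x : ℝ, Real.exp (-(1/2:ℝ) * x ^ 2) := by
    rw [← MeasureTheory.integral_const_mul]
    exact MeasureTheory.integral_congr_ae (Filter.Eventually.of_forall fun x => pdf_eq x)
  rw [this, h]
  rw [show π / (1/2) = 2 * π by ring]
  rw [inv_mul_cancel₀ (Real.sqrt_ne_zero'.2 (by positivity))]

lemma cdf_zero : stdGaussCDF 0 = 1/2 := by
  have hint := pdf_integrable
  have hsym : stdGaussCDF 0 = ∫ x in Set.Ioi (0:ℝ), stdGaussPDF x := by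
    have : (∫ x in Set.Iic (0:ℝ), stdGaussPDF (-x)) = ∫ x in Set.Ioi (-(0:ℝ)), stdGaussPDF x :=
      integral_comp_neg_Iic 0 stdGaussPDF
    simp only [neg_zero] at this
    rw [stdGaussCDF, ← this]
    refine setIntegral_congr_fun measurableSet_Iic fun x _ => ?_
    unfold stdGaussPDF; ring_nf
  have hadd : stdGaussCDF 0 + ∫ x in Set.Ioi (0:ℝ), stdGaussPDF x = 1 := by
    rw [stdGaussCDF, intervalIntegral.integral_Iic_add_Ioi hint.integrableOn hint.integrableOn, total_integral]
  rw [hsym] at hadd ⊢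
  linarith

lemma cdf_hasDerivAt (x : ℝ) : HasDerivAt stdGaussCDF (stdGaussPDF x) x := by
  have key : ∀ y : ℝ, stdGaussCDF y - stdGaussCDF 0 = ∫ t in (0:ℝ)..y, stdGaussPDF t := fun y =>
    intervalIntegral.integral_Iic_sub_Iic pdf_integrable.integrableOn pdf_integrable.integrableOn
  have hfun : stdGaussCDF = fun y => stdGaussCDF 0 + ∫ t in (0:ℝ)..y, stdGaussPDF t := by
    funext y; have := key y; linarith
  have h1 : HasDerivAt (fun y => stdGaussCDF 0 + ∫ t in (0:ℝ)..y, stdGaussPDF t) (stdGaussPDF x) x :=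
    ((intervalIntegral.integral_hasDerivAt_right (pdf_integrable.intervalIntegrable)
      (pdf_continuous.stronglyMeasurableAtFilter _ _) (pdf_continuous.continuousAt)).const_add _)
  rw [hfun]; exact h1

lemma cdf_contDiff : ContDiff ℝ 1 stdGaussCDF := by
  rw [contDiff_one_iff_deriv]
  refine ⟨fun x => (cdf_hasDerivAt x).differentiableAt, ?_⟩
  rw [show deriv stdGaussCDF = stdGaussPDF from funext fun x => (cdf_hasDerivAt x).deriv]
  exact pdf_continuous

noncomputable def gfun (a σN σY ξ : ℝ) : ℝ :=
  σY * stdGaussPDF (ξ / (2 * σN)) * (stdGaussCDF ((a + ξ) / σY) - stdGaussCDF (a / σY))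
    - σN * stdGaussPDF ((a + ξ) / σY) * (2 * stdGaussCDF (ξ / (2 * σN)) - 1)

noncomputable def g1fun (a σN σY ξ : ℝ) : ℝ :=
  -(σY / (4 * σN ^ 2)) * ξ * stdGaussPDF (ξ / (2 * σN))
      * (stdGaussCDF ((a + ξ) / σY) - stdGaussCDF (a / σY))
    + (σN / σY ^ 2) * (a + ξ) * stdGaussPDF ((a + ξ) / σY)
      * (2 * stdGaussCDF (ξ / (2 * σN)) - 1)

noncomputable def g2fun (a σN σY ξ : ℝ) : ℝ :=
  (σY / (4 * σN ^ 2)) * (ξ ^ 2 / (4 * σN ^ 2) - 1) * stdGaussPDF (ξ / (2 * σN))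
      * (stdGaussCDF ((a + ξ) / σY) - stdGaussCDF (a / σY))
    + (σN / σY ^ 2) * (1 - (a + ξ) ^ 2 / σY ^ 2) * stdGaussPDF ((a + ξ) / σY)
      * (2 * stdGaussCDF (ξ / (2 * σN)) - 1)
    + (-ξ / (4 * σN ^ 2) + (a + ξ) / σY ^ 2) * stdGaussPDF (ξ / (2 * σN))
      * stdGaussPDF ((a + ξ) / σY)

section
variable {a σN σY : ℝ}

lemma hu' (σN ξ : ℝ) : HasDerivAt (fun ξ : ℝ => ξ / (2 * σN)) (1 / (2 * σN)) ξ :=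
  (hasDerivAt_id ξ).div_const _

lemma hv' (a σY ξ : ℝ) : HasDerivAt (fun ξ : ℝ => (a + ξ) / σY) (1 / σY) ξ := by
  have := ((hasDerivAt_const ξ a).add (hasDerivAt_id ξ)).div_const σY
  simpa using this

lemma hP1 (σN ξ : ℝ) : HasDerivAt (fun ξ : ℝ => stdGaussPDF (ξ / (2 * σN)))
    (-(ξ / (2 * σN)) * stdGaussPDF (ξ / (2 * σN)) * (1 / (2 * σN))) ξ :=
  (pdf_hasDerivAt _).comp ξ (hu' σN ξ)

lemma hP2 (a σY ξ : ℝ) : HasDerivAt (fun ξ : ℝ => stdGaussPDF ((a + ξ) / σY))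
    (-((a + ξ) / σY) * stdGaussPDF ((a + ξ) / σY) * (1 / σY)) ξ :=
  (pdf_hasDerivAt _).comp ξ (hv' a σY ξ)

lemma hA (a σY ξ : ℝ) : HasDerivAt
    (fun ξ : ℝ => stdGaussCDF ((a + ξ) / σY) - stdGaussCDF (a / σY))
    (stdGaussPDF ((a + ξ) / σY) * (1 / σY)) ξ :=
  ((cdf_hasDerivAt _).comp ξ (hv' a σY ξ)).sub_const _

lemma hB (σN ξ : ℝ) : HasDerivAt (fun ξ : ℝ => 2 * stdGaussCDF (ξ / (2 * σN)) - 1)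
    (2 * (stdGaussPDF (ξ / (2 * σN)) * (1 / (2 * σN)))) ξ :=
  (((cdf_hasDerivAt _).comp ξ (hu' σN ξ)).const_mul 2).sub_const 1

lemma g_hasDeriv (hσN : σN ≠ 0) (hσY : σY ≠ 0) (ξ : ℝ) :
    HasDerivAt (gfun a σN σY) (g1fun a σN σY ξ) ξ := by
  have h := (((hP1 σN ξ).const_mul σY).mul (hA a σY ξ)).sub
    (((hP2 a σY ξ).const_mul σN).mul (hB σN ξ))
  unfold gfun
  refine h.congr_deriv ?_
  unfold g1fun
  field_simp
  ring

lemma g1_hasDeriv (hσN : σN ≠ 0) (hσY : σY ≠ 0) (ξ : ℝ) :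
    HasDerivAt (g1fun a σN σY) (g2fun a σN σY ξ) ξ := by
  have t1 := (((hasDerivAt_id ξ).const_mul (-(σY / (4 * σN ^ 2)))).mul (hP1 σN ξ)).mul (hA a σY ξ)
  have t2 := ((((hasDerivAt_const ξ a).add (hasDerivAt_id ξ)).const_mul
      (σN / σY ^ 2)).mul (hP2 a σY ξ)).mul (hB σN ξ)
  have h := t1.add t2
  unfold g1fun
  refine h.congr_deriv ?_
  unfold g2fun
  simp only [id, Pi.add_apply, Pi.mul_apply]
  field_simp
  ring
end

lemma g2_contDiff (a σN σY : ℝ) : ContDiff ℝ 1 (g2fun a σN σY) := by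
  have h1 : ContDiff ℝ 1 (fun ξ : ℝ => stdGaussPDF (ξ / (2 * σN))) :=
    pdf_contDiff.comp (contDiff_id.div_const _)
  have h2 : ContDiff ℝ 1 (fun ξ : ℝ => stdGaussPDF ((a + ξ) / σY)) :=
    pdf_contDiff.comp ((contDiff_const.add contDiff_id).div_const _)
  have h3 : ContDiff ℝ 1 (fun ξ : ℝ => stdGaussCDF ((a + ξ) / σY) - stdGaussCDF (a / σY)) :=
    (cdf_contDiff.comp ((contDiff_const.add contDiff_id).div_const _)).sub contDiff_const
  have h4 : ContDiff ℝ 1 (fun ξ : ℝ => 2 * stdGaussCDF (ξ / (2 * σN)) - 1) :=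
    (contDiff_const.mul (cdf_contDiff.comp (contDiff_id.div_const _))).sub contDiff_const
  have c1 : ContDiff ℝ 1 (fun ξ : ℝ => (σY / (4 * σN ^ 2)) * (ξ ^ 2 / (4 * σN ^ 2) - 1)) :=
    contDiff_const.mul (((contDiff_id.pow 2).div_const _).sub contDiff_const)
  have c2 : ContDiff ℝ 1 (fun ξ : ℝ => (σN / σY ^ 2) * (1 - (a + ξ) ^ 2 / σY ^ 2)) :=
    contDiff_const.mul (contDiff_const.sub (((contDiff_const.add contDiff_id).pow 2).div_const _))
  have c3 : ContDiff ℝ 1 (fun ξ : ℝ => -ξ / (4 * σN ^ 2) + (a + ξ) / σY ^ 2) :=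
    (contDiff_id.neg.div_const _).add ((contDiff_const.add contDiff_id).div_const _)
  exact (((c1.mul h1).mul h3).add ((c2.mul h2).mul h4)).add ((c3.mul h1).mul h2)

lemma mvt_step {f f' : ℝ → ℝ} {M : ℝ} {n : ℕ} (hf0 : f 0 = 0)
    (hd : ∀ x ∈ Icc (0:ℝ) 1, HasDerivAt f (f' x) x)
    (hb : ∀ x ∈ Icc (0:ℝ) 1, |f' x| ≤ M * x ^ n) :
    ∀ x ∈ Icc (0:ℝ) 1, |f x| ≤ M * x ^ (n + 1) := by
  intro ξ hξ
  have hM : 0 ≤ M := by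
    have h := le_trans (abs_nonneg (f' 1)) (hb 1 ⟨zero_le_one, le_refl 1⟩)
    simpa using h
  have key := Convex.norm_image_sub_le_of_norm_hasDerivWithin_le
    (f := f) (f' := f') (s := Icc 0 ξ) (C := M * ξ ^ n)
    (fun x hx => (hd x ⟨hx.1, hx.2.trans hξ.2⟩).hasDerivWithinAt)
    (fun x hx => by
      refine le_trans (hb x ⟨hx.1, hx.2.trans hξ.2⟩) ?_
      exact mul_le_mul_of_nonneg_left (pow_le_pow_left₀ hx.1 hx.2 n) hM)
    (convex_Icc 0 ξ) ⟨le_refl 0, hξ.1⟩ ⟨hξ.1, le_refl ξ⟩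
  rw [hf0, sub_zero, sub_zero] at key
  rw [Real.norm_eq_abs, Real.norm_eq_abs, abs_of_nonneg hξ.1] at key
  calc |f ξ| ≤ M * ξ ^ n * ξ := key
    _ = M * ξ ^ (n + 1) := by ring

/-- Local expansion of
`g(ξ) = σ_Y φ(ξ/(2σ_N))·(Φ((a+ξ)/σ_Y) − Φ(a/σ_Y)) − σ_N φ((a+ξ)/σ_Y)·(2Φ(ξ/(2σ_N)) − 1)`:
`g(ξ) = φ(0)φ(a/σ_Y)(a/(2σ_Y²))ξ² + O(ξ³)` as `ξ → 0⁺`; in particular `g(ξ) > 0`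
for all sufficiently small `ξ > 0`. -/
theorem leakage_initially_increasing (a σN σY : ℝ) (ha : 0 < a) (hσN : 0 < σN) (hσY : 0 < σY) :
    (fun ξ : ℝ =>
        (σY * stdGaussPDF (ξ / (2 * σN)) * (stdGaussCDF ((a + ξ) / σY) - stdGaussCDF (a / σY))
          - σN * stdGaussPDF ((a + ξ) / σY) * (2 * stdGaussCDF (ξ / (2 * σN)) - 1))
        - stdGaussPDF 0 * stdGaussPDF (a / σY) * (a / (2 * σY ^ 2)) * ξ ^ 2)
      =O[nhdsWithin 0 (Set.Ioi 0)] (fun ξ : ℝ => ξ ^ 3) ∧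
    ∀ᶠ ξ in nhdsWithin (0 : ℝ) (Set.Ioi 0),
      0 < σY * stdGaussPDF (ξ / (2 * σN)) * (stdGaussCDF ((a + ξ) / σY) - stdGaussCDF (a / σY))
          - σN * stdGaussPDF ((a + ξ) / σY) * (2 * stdGaussCDF (ξ / (2 * σN)) - 1) := by
  set c : ℝ := stdGaussPDF 0 * stdGaussPDF (a / σY) * (a / (2 * σY ^ 2)) with hcdef
  have hc : 0 < c := by
    have := pdf_pos 0
    have := pdf_pos (a / σY)
    have : (0:ℝ) < a / (2 * σY ^ 2) := by positivity
    exact mul_pos (mul_pos (pdf_pos 0) (pdf_pos _)) this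
  have hg0 : gfun a σN σY 0 = 0 := by
    simp [gfun, cdf_zero]
  have hg10 : g1fun a σN σY 0 = 0 := by
    simp [g1fun, cdf_zero]
  have hg20 : g2fun a σN σY 0 = 2 * c := by
    simp only [g2fun, hcdef]
    rw [show (0:ℝ) / (2 * σN) = 0 by simp]
    simp [cdf_zero]
    field_simp
  -- bound on the derivative of g2fun on [0,1]
  obtain ⟨M₀, hM₀⟩ := (isCompact_Icc (a := (0:ℝ)) (b := 1)).exists_bound_of_continuousOn
    (((g2_contDiff a σN σY).continuous_deriv le_rfl).continuousOn)
  set M : ℝ := max M₀ 0 with hMdef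
  have hMnn : 0 ≤ M := le_max_right _ _
  have hdiff2 : Differentiable ℝ (g2fun a σN σY) := (g2_contDiff a σN σY).differentiable one_ne_zero
  have hb2 : ∀ x ∈ Icc (0:ℝ) 1, |deriv (g2fun a σN σY) x| ≤ M * x ^ 0 := by
    intro x hx
    rw [pow_zero, mul_one]
    exact le_trans (hM₀ x hx) (le_max_left _ _)
  have step1 : ∀ x ∈ Icc (0:ℝ) 1, |g2fun a σN σY x - 2 * c| ≤ M * x ^ 1 :=
    mvt_step (by rw [hg20]; ring)
      (fun x _ => ((hdiff2 x).hasDerivAt).sub_const _) hb2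
  have step2 : ∀ x ∈ Icc (0:ℝ) 1, |g1fun a σN σY x - 2 * c * x| ≤ M * x ^ 2 := by
    refine mvt_step (by rw [hg10]; ring) (fun x _ => ?_) step1
    have h := (g1_hasDeriv (a := a) hσN.ne' hσY.ne' x).sub ((hasDerivAt_id x).const_mul (2 * c))
    refine h.congr_deriv ?_
    simp
  have step3 : ∀ x ∈ Icc (0:ℝ) 1, |gfun a σN σY x - c * x ^ 2| ≤ M * x ^ 3 := by
    refine mvt_step (by rw [hg0]; ring) (fun x _ => ?_) step2
    have h := (g_hasDeriv (a := a) hσN.ne' hσY.ne' x).sub ((hasDerivAt_pow 2 x).const_mul c)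
    refine h.congr_deriv ?_
    simp; ring
  constructor
  · rw [Asymptotics.isBigO_iff]
    refine ⟨M, ?_⟩
    filter_upwards [Ioc_mem_nhdsGT_of_mem (⟨le_refl 0, zero_lt_one⟩ : (0:ℝ) ∈ Ico 0 1)] with ξ hξ
    have h := step3 ξ ⟨hξ.1.le, hξ.2⟩
    have : ‖gfun a σN σY ξ - c * ξ ^ 2‖ ≤ M * ‖ξ ^ 3‖ := by
      rw [Real.norm_eq_abs, Real.norm_eq_abs, abs_of_nonneg (pow_nonneg hξ.1.le 3)]
      exact h
    calc ‖(σY * stdGaussPDF (ξ / (2 * σN)) * (stdGaussCDF ((a + ξ) / σY) - stdGaussCDF (a / σY))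
          - σN * stdGaussPDF ((a + ξ) / σY) * (2 * stdGaussCDF (ξ / (2 * σN)) - 1))
        - c * ξ ^ 2‖ = ‖gfun a σN σY ξ - c * ξ ^ 2‖ := by rw [gfun]
      _ ≤ M * ‖ξ ^ 3‖ := this
  · have hδ : (0:ℝ) < min 1 (c / (M + 1)) := by
      exact lt_min zero_lt_one (div_pos hc (by linarith))
    filter_upwards [Ioo_mem_nhdsGT_of_mem (⟨le_refl 0, hδ⟩ : (0:ℝ) ∈ Ico 0 (min 1 (c / (M + 1))))]
      with ξ hξ
    have hξ1 : ξ ≤ 1 := le_of_lt (lt_of_lt_of_le hξ.2 (min_le_left _ _))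
    have h := step3 ξ ⟨hξ.1.le, hξ1⟩
    have hlow : c * ξ ^ 2 - M * ξ ^ 3 ≤ gfun a σN σY ξ := by
      have := (abs_le.1 h).1
      linarith
    have hltc : ξ * (M + 1) < c := by
      have h2 : ξ < c / (M + 1) := lt_of_lt_of_le hξ.2 (min_le_right _ _)
      exact (lt_div_iff₀ (by linarith : (0:ℝ) < M + 1)).1 h2
    have hpos : 0 < ξ ^ 2 * (c - M * ξ) := by
      refine mul_pos (pow_pos hξ.1 2) ?_
      nlinarith [hξ.1]
    have hexp : ξ ^ 2 * (c - M * ξ) = c * ξ ^ 2 - M * ξ ^ 3 := by ring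
    have : 0 < gfun a σN σY ξ := by linarith [hexp ▸ hpos]
    rw [gfun] at this
    exact this
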